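/- arXiv:2201.12846 — 5 statements merged into one kernel-verified Lean document; each statement's English description precedes it below -/
import Mathlib

section
/- Let K be a combinatorial cell complex and let x ∈ K be a cell whose set of cofaces has at least two elements. Then x equals the intersection of all its cofaces, and this intersection is the greatest lower bound of the set of cofaces of x in the poset (K, ⊆). -/
open scoped Classical

universe u v

/-- Underlying data of a combinatorial cell complex: a finite collection of
finite subsets of a vertex type `V` (the cells) together with a rank function. -/
structure Precc (V : Type u) where
  cells : Finset (Finset V)
  rk : Finset V → ℕ

namespace Precc

variable {V : Type u} [DecidableEq V] [Fintype V]

/-- The axioms of a combinatorial cell complex (cc): cells are nonempty, every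
vertex of a cell is a (rank 0) cell, rank-0 cells are exactly the singletons,
rank is strictly monotone, cells are closed under nonempty intersections, ranks
have no gaps, and the diamond property. -/
def IsCC (K : Precc V) : Prop :=
  (∀ x ∈ K.cells, x.Nonempty) ∧
  (∀ x ∈ K.cells, ∀ a ∈ x, ({a} : Finset V) ∈ K.cells) ∧
  (∀ x ∈ K.cells, (K.rk x = 0 ↔ x.card = 1)) ∧
  (∀ x ∈ K.cells, ∀ y ∈ K.cells, x ⊂ y → K.rk x < K.rk y) ∧
  (∀ x ∈ K.cells, ∀ y ∈ K.cells, x ∩ y = ∅ ∨ x ∩ y ∈ K.cells) ∧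
  (∀ x ∈ K.cells, ∀ y ∈ K.cells, x ⊂ y →
    ∃ z ∈ K.cells, x ⊂ z ∧ z ⊆ y ∧ K.rk z = K.rk x + 1) ∧
  (∀ x ∈ K.cells, ∀ y ∈ K.cells, x ⊆ y → K.rk y = K.rk x + 2 →
    ∃ z₁ ∈ K.cells, ∃ z₂ ∈ K.cells, z₁ ≠ z₂ ∧
      ∀ z ∈ K.cells, ((x ⊆ z ∧ z ⊆ y ∧ K.rk z = K.rk x + 1) ↔ (z = z₁ ∨ z = z₂)))

/-- The set of cofaces of a cell. -/
noncomputable def cface (K : Precc V) (x : Finset V) : Finset (Finset V) :=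
  K.cells.filter fun y => x ⊆ y ∧ K.rk y = K.rk x + 1

/-- The set of faces of a cell. -/
noncomputable def face (K : Precc V) (x : Finset V) : Finset (Finset V) :=
  K.cells.filter fun y => y ⊆ x ∧ K.rk y + 1 = K.rk x

/-- The rank (dimension) of the complex. -/
def Rk (K : Precc V) : ℕ := K.cells.sup K.rk

/-- The set of cells of a given rank. -/
noncomputable def cellsOfRank (K : Precc V) (r : ℕ) : Finset (Finset V) :=
  K.cells.filter fun x => K.rk x = r

/-- The dual set of a set of vertices: the maximal cells containing it. -/
noncomputable def dualSet (K : Precc V) (A : Finset V) : Finset (Finset V) :=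
  (K.cellsOfRank K.Rk).filter fun z => A ⊆ z

/-- A cc is pure if every maximal cell has maximal rank. -/
def Pure (K : Precc V) : Prop :=
  ∀ x ∈ K.cells, (∀ y ∈ K.cells, ¬ x ⊂ y) → K.rk x = K.Rk

/-- A cc is graph-based if every edge (1-cell) has exactly two vertices. -/
def GraphBased (K : Precc V) : Prop :=
  ∀ e ∈ K.cells, K.rk e = 1 → e.card = 2

/-- Non-branching: every sub-maximal cell lies in at most two maximal cells. -/
def NonBranching (K : Precc V) : Prop :=
  ∀ y ∈ K.cells, K.rk y + 1 = K.Rk → (K.dualSet y).card ≤ 2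

def NonSingular (K : Precc V) : Prop :=
  K.GraphBased ∧ K.Pure ∧ K.NonBranching

/-- Closed: non-singular and every sub-maximal cell lies in exactly two
maximal cells. -/
def Closed (K : Precc V) : Prop :=
  K.NonSingular ∧ ∀ y ∈ K.cells, K.rk y + 1 = K.Rk → (K.dualSet y).card = 2

/-- Cells of the boundary: cells contained in a sub-maximal cell lying in
exactly one maximal cell. -/
noncomputable def bdryCells (K : Precc V) : Finset (Finset V) :=
  K.cells.filter fun x =>
    ∃ y ∈ K.cells, x ⊆ y ∧ K.rk y + 1 = K.Rk ∧ (K.dualSet y).card = 1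

/-- The boundary complex. -/
noncomputable def boundary (K : Precc V) : Precc V :=
  ⟨K.bdryCells, K.rk⟩

/-- The dual complex of a (pure) cc, with rank of the dual cell of `x` equal
to `Rk K - rk x` (encoded intrinsically via the intersection of the dual set). -/
noncomputable def dual (K : Precc V) : Precc (Finset V) :=
  ⟨K.cells.image K.dualSet, fun A => K.Rk - K.rk (A.inf id)⟩

/-- The barycentric subdivision: cells are nonempty chains of cells of `K`. -/
noncomputable def bdiv (K : Precc V) : Precc (Finset V) :=
  ⟨K.cells.powerset.filter fun c => c.Nonempty ∧ ∀ x ∈ c, ∀ y ∈ c, x ⊆ y ∨ y ⊆ x,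
   fun c => c.card - 1⟩

/-- Isomorphism of (pre)cell complexes: a rank-preserving bijection between the
cell sets preserving and reflecting inclusions. -/
def IsIso {A : Type u} {B : Type v} (K : Precc A) (L : Precc B) : Prop :=
  ∃ f : Finset A → Finset B,
    Set.BijOn f ↑K.cells ↑L.cells ∧
    (∀ x ∈ K.cells, ∀ y ∈ K.cells, (x ⊆ y ↔ f x ⊆ f y)) ∧
    (∀ x ∈ K.cells, L.rk (f x) = K.rk x)

/-- Adjacency of two vertices via an edge of `K`. -/
def EdgeRel (K : Precc V) (a b : V) : Prop :=
  ({a, b} : Finset V) ∈ K.cells ∧ K.rk ({a, b} : Finset V) = 1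

/-- Connectedness of a cc: graph-based, and the 1-skeleton is connected. -/
def Connected (K : Precc V) : Prop :=
  K.GraphBased ∧ ∀ a b : V, ({a} : Finset V) ∈ K.cells → ({b} : Finset V) ∈ K.cells →
    Relation.ReflTransGen K.EdgeRel a b

/-- Cell-connectedness: the 1-skeleton of every cell is connected. -/
def CellConnected (K : Precc V) : Prop :=
  K.GraphBased ∧ ∀ x ∈ K.cells, ∀ a ∈ x, ∀ b ∈ x,
    Relation.ReflTransGen (fun s t => s ∈ x ∧ t ∈ x ∧ K.EdgeRel s t) a b

/-- A local cc: connected and cell-connected. -/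
def LocalCC (K : Precc V) : Prop := K.Connected ∧ K.CellConnected

/-- The vertex set of a cc. -/
noncomputable def vertices (K : Precc V) : Finset V :=
  Finset.univ.filter fun a => ({a} : Finset V) ∈ K.cells

/-- `J` is a sub-cell complex of `K`. -/
def Subcomplex (J K : Precc V) : Prop :=
  J.cells ⊆ K.cells ∧ ∀ x ∈ J.cells, J.rk x = K.rk x

/-- The edges of `K` containing a given vertex. -/
noncomputable def EdgesAt (K : Precc V) (a : V) : Finset (Finset V) :=
  K.cells.filter fun e => K.rk e = 1 ∧ a ∈ e

/-- The edges of `K` at a vertex `a` that are contained in a cell `x`. -/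
noncomputable def edgesIn (K : Precc V) (a : V) (x : Finset V) : Finset (Finset V) :=
  (K.EdgesAt a).filter fun e => e ⊆ x

/-- `r`-fullness: every set of `j` edges at a vertex (`2 ≤ j ≤ r`) is the set of
edges at that vertex of some `j`-cell. -/
def RFull (K : Precc V) (r : ℕ) : Prop :=
  ∀ a : V, ({a} : Finset V) ∈ K.cells → ∀ j : ℕ, 2 ≤ j → j ≤ r →
    ∀ S ⊆ K.EdgesAt a, S.card = j →
      ∃ x ∈ K.cells, K.rk x = j ∧ K.edgesIn a x = S

/-- Fullness (= 2-fullness). -/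
def Full (K : Precc V) : Prop := K.RFull 2

/-- `n`-regularity: every vertex lies in exactly `n` edges. -/
def Regular (K : Precc V) (n : ℕ) : Prop :=
  ∀ a ∈ K.vertices, (K.EdgesAt a).card = n

/-- `m`-edge-regularity: every edge lies in exactly `m` 2-cells. -/
def EdgeRegular (K : Precc V) (m : ℕ) : Prop :=
  ∀ e ∈ K.cells, K.rk e = 1 → ((K.cellsOfRank 2).filter fun C => e ⊆ C).card = m

/-- Simplicial complex: every nonempty subset of a cell is a cell. -/
def Simplicial (K : Precc V) : Prop :=
  ∀ x ∈ K.cells, ∀ y : Finset V, y ⊆ x → y.Nonempty → y ∈ K.cells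

/-- Adjacency in the dual graph: two distinct maximal cells meeting along an
interior sub-maximal cell. -/
def DualAdj (K : Precc V) (z z' : Finset V) : Prop :=
  z ∈ K.cellsOfRank K.Rk ∧ z' ∈ K.cellsOfRank K.Rk ∧ z ≠ z' ∧
  ∃ y ∈ K.cells, K.rk y + 1 = K.Rk ∧ y ⊆ z ∧ y ⊆ z' ∧ (K.dualSet y).card = 2

/-- A pinch: a cell whose set of containing maximal cells induces a
disconnected subgraph of the dual graph. -/
def IsPinch (K : Precc V) (x : Finset V) : Prop :=
  ¬ ∀ z ∈ K.dualSet x, ∀ z' ∈ K.dualSet x,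
      Relation.ReflTransGen
        (fun a b => a ∈ K.dualSet x ∧ b ∈ K.dualSet x ∧ K.DualAdj a b) z z'

/-- Non-pinching: no `K`-pinch and no `∂K`-pinch. -/
def NonPinching (K : Precc V) : Prop :=
  (∀ x ∈ K.cells, ¬ K.IsPinch x) ∧ (∀ x ∈ K.boundary.cells, ¬ K.boundary.IsPinch x)

/-- The Euler characteristic. -/
noncomputable def chi (K : Precc V) : ℤ :=
  ∑ r ∈ Finset.range (K.Rk + 1), (-1 : ℤ) ^ r * ((K.cellsOfRank r).card : ℤ)

/-- Restriction of `K` to the cells contained in `A`. -/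
noncomputable def restrict (K : Precc V) (A : Finset V) : Precc V :=
  ⟨K.cells.filter fun x => x ⊆ A, K.rk⟩

/-- A shelling of a (non-singular) cc: for rank 0 the trivial order on the one
point, for rank ≥ 1 a linear order of the facets such that the boundary of the
first facet has a shelling and each facet meets the previous ones in a
non-singular complex of rank one less that has a shelling completable into a
shelling of the boundary of the facet, with the boundary conditions of
Definition 4.9 of the paper (see `IsShelling` below).
The intersection of the `k`-th facet with the union of the previous ones,
as a subcomplex of `K`. -/
noncomputable def interComplex (K : Precc V) (L : List (Finset V)) (k : ℕ)
    (hk : k < L.length) : Precc V :=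
  K.restrict (L.get ⟨k, hk⟩ ∩ (L.take k).foldr (· ∪ ·) ∅)

set_option maxHeartbeats 1000000 in
inductive IsShelling : Precc V → List (Finset V) → Prop where
  | point (K : Precc V) (x : Finset V) (hx : K.cells = {x}) (h0 : K.rk x = 0) :
      IsShelling K [x]
  | step (K : Precc V) (L : List (Finset V)) (L₀ : List (Finset V))
      (S S' : ℕ → List (Finset V))
      (hR : 1 ≤ K.Rk) (hnd : L.Nodup) (hne : L ≠ [])
      (henum : L.toFinset = K.cellsOfRank K.Rk)
      (hfirst : IsShelling ((K.restrict L.headI).boundary) L₀)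
      (hS : ∀ (k : ℕ) (hk : k < L.length), 0 < k →
        IsShelling (K.interComplex L k hk) (S k))
      (hS' : ∀ (k : ℕ) (hk : k < L.length), 0 < k →
        IsShelling ((K.restrict (L.get ⟨k, hk⟩)).boundary) (S' k))
      (hpre : ∀ (k : ℕ), k < L.length → 0 < k → S k <+: S' k)
      (hns : ∀ (k : ℕ) (hk : k < L.length), 0 < k →
        (K.interComplex L k hk).NonSingular ∧
        (K.interComplex L k hk).Rk + 1 = K.Rk ∧
        (k < L.length - 1 → (K.interComplex L k hk).bdryCells.Nonempty) ∧
        ((K.interComplex L k hk).bdryCells = ∅ →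
          k = L.length - 1 ∧ K.Closed ∧
          (K.interComplex L k hk).cells = ((K.restrict (L.get ⟨k, hk⟩)).boundary).cells)) :
      IsShelling K L

/-- A shellable cc. -/
def Shellable (K : Precc V) : Prop :=
  K.NonSingular ∧ ∃ L : List (Finset V), IsShelling K L

/-- The connection relation: `∇^a_b e = f`, i.e. `f` is the edge at `b`
associated to the edge `e` at `a` via the unique 2-cell containing `e` and the
edge `{a,b}` (and `{a,b}` is sent to itself). -/
def ConnRel (K : Precc V) (a b : V) (e f : Finset V) : Prop :=
  (e = ({a, b} : Finset V) ∧ f = ({a, b} : Finset V)) ∨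
  (e ≠ ({a, b} : Finset V) ∧ f ≠ ({a, b} : Finset V) ∧
    e ∈ K.cells ∧ f ∈ K.cells ∧ K.rk e = 1 ∧ K.rk f = 1 ∧ a ∈ e ∧ b ∈ f ∧
    ∃ C ∈ K.cells, K.rk C = 2 ∧ e ⊆ C ∧ ({a, b} : Finset V) ⊆ C ∧ f ⊆ C)

/-- `C` is a connected component of a 2-cell of `K`. -/
def IsComponentOfTwoCell (K : Precc V) (C : Finset V) : Prop :=
  ∃ C₀ ∈ K.cells, K.rk C₀ = 2 ∧ C ⊆ C₀ ∧ C.Nonempty ∧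
    (∀ e ∈ K.cells, K.rk e = 1 → e ⊆ C₀ → (e ∩ C).Nonempty → e ⊆ C) ∧
    (∀ a ∈ C, ∀ b ∈ C,
      Relation.ReflTransGen (fun s t => s ∈ C ∧ t ∈ C ∧ K.EdgeRel s t) a b)

/-- `c` is a cyclic enumeration of the vertex set `C` along edges of `K`. -/
def IsCycleOf (K : Precc V) (C : Finset V) (c : List V) : Prop :=
  c ≠ [] ∧ c.Nodup ∧ c.toFinset = C ∧
  ∀ a : V, c.head? = some a → List.Chain' K.EdgeRel (c ++ [a])

/-- A path in the 1-skeleton, recorded by its list of visited vertices. -/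
def IsPathList (K : Precc V) (l : List V) : Prop :=
  l ≠ [] ∧ List.Chain' K.EdgeRel l

/-- Transport of edges along a path via the connection. -/
inductive Transport (K : Precc V) : List V → Finset V → Finset V → Prop where
  | single (a : V) (e : Finset V) : Transport K [a] e e
  | cons {a b : V} {l : List V} {e f g : Finset V} :
      ConnRel K a b e f → Transport K (b :: l) f g → Transport K (a :: b :: l) e g

/-- `p` and `p'` are the two complementary arcs of the boundary cycle of the
2-cell component `C`, with the same endpoints. -/
def ComplementaryArcs (K : Precc V) (C : Finset V) (p p' : List V) : Prop :=
  p ≠ [] ∧ p' ≠ [] ∧ p.head? = p'.head? ∧ p.getLast? = p'.getLast? ∧ p.Nodup ∧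
  ∃ c : List V, IsCycleOf K C c ∧ ∃ a : V, c.head? = some a ∧
    (p ++ p'.reverse.tail = c ++ [a] ∨ p' ++ p.reverse.tail = c ++ [a])

/-- Elementary moves of paths: an edge move (deleting a back-and-forth along an
edge) and a 2-cell move (replacing an arc of a 2-cell component by the
complementary arc). -/
inductive Move (K : Precc V) : List V → List V → Prop where
  | edgeDel (a b : List V) (u w : V) (h : K.EdgeRel u w) :
      Move K (a ++ u :: w :: u :: b) (a ++ u :: b)
  | cellMove (a b p p' : List V) (C : Finset V)
      (hC : K.IsComponentOfTwoCell C) (harc : K.ComplementaryArcs C p p') :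
      Move K (a ++ p ++ b) (a ++ p' ++ b)

/-- Homotopy of paths: generated by finitely many moves (and their inverses). -/
def Homotopic (K : Precc V) (p q : List V) : Prop :=
  Relation.ReflTransGen (fun l l' => Move K l l' ∨ Move K l' l) p q

/-- Monodromy-freedom: the holonomy of the connection around the boundary loop
of any connected component of a 2-cell is the identity on the incident edges. -/
def MonodromyFree (K : Precc V) : Prop :=
  ∀ C : Finset V, K.IsComponentOfTwoCell C → ∀ c : List V, K.IsCycleOf C c →
    ∀ a : V, c.head? = some a →
      ∀ e f : Finset V, e ∈ K.cells → K.rk e = 1 → e ∩ C = {a} →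
        Transport K (c ++ [a]) e f → f = e

/-- Evenness: every connected component of every 2-cell has an even number of
vertices. -/
def EvenCC (K : Precc V) : Prop :=
  ∀ C : Finset V, K.IsComponentOfTwoCell C → Even C.card

/-- The collar of a vertex set `A` in `K`: cells meeting `A` properly. -/
noncomputable def collarCells (K : Precc V) (A : Finset V) : Finset (Finset V) :=
  K.cells.filter fun x => (x ∩ A).Nonempty ∧ ¬ x ⊆ A

/-- The set `E^x_A` of edges of `x` with exactly one vertex in `A`. -/
noncomputable def edgeCollar (K : Precc V) (A : Finset V) (x : Finset V) : Finset (Finset V) :=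
  K.cells.filter fun e => K.rk e = 1 ∧ e ⊆ x ∧ (e ∩ A).card = 1

/-- The `∼`-dual of a cell: the union of its dual in `K` and its dual in `∂K`. -/
noncomputable def bdualSet (K : Precc V) (x : Finset V) : Finset (Finset V) :=
  K.dualSet x ∪ (K.boundary.cells.filter fun y => K.rk y + 1 = K.Rk ∧ x ⊆ y)

/-- `J` is a (possibly empty) union of connected components of `K`. -/
def IsUnionOfComponents (K J : Precc V) : Prop :=
  ∃ W : Finset V, W ⊆ K.vertices ∧
    (∀ a ∈ W, ∀ b : V, Relation.ReflTransGen K.EdgeRel a b → b ∈ W) ∧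
    J.cells = K.cells.filter fun x => x ⊆ W

/-- `g` is the greatest lower bound of `S` among the cells of `K`. -/
def IsMeetOf (K : Precc V) (S : Finset (Finset V)) (g : Finset V) : Prop :=
  g ∈ K.cells ∧ (∀ s ∈ S, g ⊆ s) ∧ ∀ b ∈ K.cells, (∀ s ∈ S, b ⊆ s) → b ⊆ g

/-- `g` is the least upper bound of `S` among the cells of `K`. -/
def IsJoinOf (K : Precc V) (S : Finset (Finset V)) (g : Finset V) : Prop :=
  g ∈ K.cells ∧ (∀ s ∈ S, s ⊆ g) ∧ ∀ b ∈ K.cells, (∀ s ∈ S, s ⊆ b) → g ⊆ b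

/-- A reduction `ρ : J → K` (so that `J` is a subdivision of `K`). -/
def IsReduction (J K : Precc V) (ρ : Finset V → Finset V) : Prop :=
  (∀ x ∈ J.cells, ρ x ∈ K.cells) ∧
  (∀ y ∈ K.cells, ∃ x ∈ J.cells, ρ x = y) ∧
  (∀ x ∈ J.cells, ∀ y ∈ J.cells, x ⊆ y → ρ x ⊆ ρ y) ∧
  (∀ x ∈ J.cells, ∀ y ∈ J.cells, K.rk (ρ x) = 0 → ρ x = ρ y → x = y) ∧
  (∀ x ∈ J.cells, ∀ g : Finset V, IsMeetOf J (J.cface x) g →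
    ∀ h : Finset V, IsMeetOf K ((J.cface x).image ρ) h → ρ g = h) ∧
  (∀ x ∈ J.cells, ∀ y ∈ K.cells, ρ x ⊆ y →
    ∃ w ∈ J.cells, x ⊆ w ∧ J.rk w = K.rk y ∧ ρ w = y) ∧
  (∀ x ∈ J.cells, J.rk x + 1 = K.rk (ρ x) →
    ((J.cface x).filter fun w => ρ w = ρ x).card = 2) ∧
  (∀ x ∈ J.cells, J.rk x = K.rk (ρ x) →
    ∀ y ∈ K.cface (ρ x), ((J.cface x).filter fun w => ρ w = y).card = 1)

/-- A collapse `π : J → K` (so that `J` is an expansion of `K`). -/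
def IsCollapse (J K : Precc V) (π : Finset V → Finset V) : Prop :=
  (∀ x ∈ J.cells, π x ∈ K.cells) ∧
  (∀ y ∈ K.cells, ∃ x ∈ J.cells, π x = y) ∧
  (∀ x ∈ J.cells, ∀ y ∈ J.cells, x ⊆ y → π x ⊆ π y) ∧
  (∀ x ∈ J.cells, ∀ y ∈ J.cells, (∀ z ∈ K.cells, ¬ π x ⊂ z) → π x = π y → x = y) ∧
  (∀ x ∈ J.cells, 1 ≤ J.rk x → IsJoinOf K ((J.face x).image π) (π x)) ∧
  (∀ x ∈ J.cells, ∀ y ∈ K.cells, y ⊆ π x →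
    ∃ w ∈ J.cells, w ⊆ x ∧ J.rk w = K.rk y ∧ π w = y) ∧
  (∀ x ∈ J.cells, K.rk (π x) + 1 = J.rk x →
    ((J.face x).filter fun w => π w = π x).card = 2) ∧
  (∀ x ∈ J.cells, J.rk x = K.rk (π x) →
    ∀ y ∈ K.face (π x), ((J.face x).filter fun w => π w = y).card = 1)

/-- The domain `E_a^{dual b}` of the connection `∇^a_b`: edges at `a` lying in
a common 2-cell with the edge `{a,b}`. -/
noncomputable def connDomain (K : Precc V) (a b : V) : Finset (Finset V) :=
  (K.EdgesAt a).filter fun e =>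
    ∃ C ∈ K.cells, K.rk C = 2 ∧ e ⊆ C ∧ ({a, b} : Finset V) ⊆ C

end Precc

namespace Precc

variable {V : Type u} [DecidableEq V] [Fintype V]

/-- In a cc, a cell with at least two cofaces equals the
intersection of its cofaces, and this intersection is the greatest lower bound
of the set of cofaces in the poset of cells ordered by inclusion. -/
theorem statement_0 (K : Precc V) (hK : K.IsCC) (x : Finset V) (hx : x ∈ K.cells)
    (h2 : 2 ≤ (K.cface x).card) :
    x = (K.cface x).inf id ∧
    (∀ y ∈ K.cface x, x ⊆ y) ∧
    (∀ w ∈ K.cells, (∀ y ∈ K.cface x, w ⊆ y) → w ⊆ x) := by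
  obtain ⟨hne, hvert, hrk0, hmono, hinter, hgap, hdiam⟩ := hK
  have hsub : ∀ y ∈ K.cface x, x ⊆ y := by
    intro y hy
    simp only [cface, Finset.mem_filter] at hy
    exact hy.2.1
  -- two distinct cofaces
  obtain ⟨y₁, hy₁, y₂, hy₂, hne12⟩ := Finset.one_lt_card.mp h2
  have hy₁' := Finset.mem_filter.mp hy₁
  have hy₂' := Finset.mem_filter.mp hy₂
  have hxsub : x ⊆ y₁ ∩ y₂ := Finset.subset_inter hy₁'.2.1 hy₂'.2.1
  have hxne : x.Nonempty := hne x hx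
  have hiK : y₁ ∩ y₂ ∈ K.cells := by
    rcases hinter y₁ hy₁'.1 y₂ hy₂'.1 with h | h
    · rw [h] at hxsub
      exact absurd (Finset.subset_empty.mp hxsub) hxne.ne_empty
    · exact h
  have hkey : x = y₁ ∩ y₂ := by
    by_contra hne'
    have hss : x ⊂ y₁ ∩ y₂ := hxsub.ssubset_of_ne hne'
    have h1 : K.rk x < K.rk (y₁ ∩ y₂) := hmono x hx _ hiK hss
    have hss2 : y₁ ∩ y₂ ⊂ y₁ := by
      refine (Finset.inter_subset_left).ssubset_of_ne ?_
      intro h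
      have : y₁ ⊆ y₂ := by
        intro a ha; have := h ▸ ha; exact (Finset.mem_inter.mp this).2
      rcases this.eq_or_ssubset with h' | h'
      · exact hne12 h'
      · have := hmono y₁ hy₁'.1 y₂ hy₂'.1 h'
        rw [hy₁'.2.2, hy₂'.2.2] at this
        omega
    have h2' : K.rk (y₁ ∩ y₂) < K.rk y₁ := hmono _ hiK y₁ hy₁'.1 hss2
    rw [hy₁'.2.2] at h2'
    omega
  refine ⟨?_, hsub, ?_⟩
  · apply Finset.Subset.antisymm
    · exact Finset.le_inf fun y hy => hsub y hy
    · calc (K.cface x).inf id ⊆ y₁ ∩ y₂ :=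
            Finset.subset_inter (Finset.le_iff_subset.mp (Finset.inf_le hy₁)) (Finset.le_iff_subset.mp (Finset.inf_le hy₂))
        _ = x := hkey.symm
  · intro w _ hw
    rw [hkey]
    exact Finset.subset_inter (hw y₁ hy₁) (hw y₂ hy₂)


end Precc
end

section
/- Let K be a closed cell complex and x, y ∈ K. Then x ⊊ y if and only if the dual set of y is strictly contained in the dual set of x; consequently the duality map x ↦ x̄ is a bijection from K onto its image {x̄ | x ∈ K}. -/
open scoped Classical

universe u v

/-! In a closed cc every cell `x` is the intersection of the facets containing it. That
intersection is a cell containing `x`, and it cannot be strictly larger, because whenever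
`x ⊂ y` some facet through `x` misses `y`. The latter is where closedness enters: a cell of
corank one lies in two facets, and the diamond property propagates this to higher corank.
Hence `x ↦ x̄` reflects inclusion, and the dual set determines the cell. -/

namespace Precc

variable {V : Type u}

lemma rk_le_Rk {K : Precc V} {x : Finset V} (hx : x ∈ K.cells) : K.rk x ≤ K.Rk :=
  Finset.le_sup hx

variable [DecidableEq V]

lemma mem_dualSet {K : Precc V} {A z : Finset V} :
    z ∈ K.dualSet A ↔ z ∈ K.cells ∧ K.rk z = K.Rk ∧ A ⊆ z := by
  simp [dualSet, cellsOfRank, and_assoc]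

lemma dualSet_anti (K : Precc V) {x y : Finset V} (hxy : x ⊆ y) :
    K.dualSet y ⊆ K.dualSet x := fun z hz => by
  rw [mem_dualSet] at hz ⊢
  exact ⟨hz.1, hz.2.1, hxy.trans hz.2.2⟩

lemma Pure.dualSet_nonempty {K : Precc V} (hp : K.Pure) {x : Finset V} (hx : x ∈ K.cells) :
    (K.dualSet x).Nonempty := by
  obtain ⟨m, hxm, hm⟩ := K.cells.exists_le_maximal hx
  have hmR : K.rk m = K.Rk := hp m hm.1 fun y hy hmy => hmy.not_ge (hm.2 hy hmy.le)
  exact ⟨m, mem_dualSet.mpr ⟨hm.1, hmR, hxm⟩⟩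

namespace IsCC

variable {K : Precc V} (hK : K.IsCC)
include hK

lemma eq_of_subset_of_rk_le {x y : Finset V} (hx : x ∈ K.cells) (hy : y ∈ K.cells)
    (hxy : x ⊆ y) (hr : K.rk y ≤ K.rk x) : x = y := by
  by_contra hne
  exact (hK.2.2.2.1 x hx y hy (hxy.ssubset_of_ne hne)).not_ge hr

lemma inf_mem_cells [Fintype V] {F : Finset (Finset V)} (hF : F.Nonempty) (hFK : F ⊆ K.cells)
    (hinf : (F.inf id).Nonempty) : F.inf id ∈ K.cells := by
  induction hF using Finset.Nonempty.cons_induction with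
  | singleton a => simpa using hFK
  | cons a s has hs ih =>
    rw [Finset.cons_subset] at hFK
    rw [Finset.inf_cons] at hinf ⊢
    have hs_cell := ih hFK.2 (hinf.mono inf_le_right)
    exact (hK.2.2.2.2.1 a hFK.1 _ hs_cell).resolve_left hinf.ne_empty

lemma subset_of_two_faces_subset {y a b z : Finset V} (hy : y ∈ K.cells) (ha : a ∈ K.cells)
    (hb : b ∈ K.cells) (hz : z ∈ K.cells) (hay : a ⊆ y) (hby : b ⊆ y)
    (hra : K.rk a + 1 = K.rk y) (hrb : K.rk b = K.rk a) (hab : a ≠ b)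
    (haz : a ⊆ z) (hbz : b ⊆ z) : y ⊆ z := by
  have hu : y ∩ z ∈ K.cells := (hK.2.2.2.2.1 y hy z hz).resolve_left
    ((hK.1 a ha).mono (Finset.subset_inter hay haz)).ne_empty
  have hau : a ⊂ y ∩ z := (Finset.subset_inter hay haz).ssubset_of_ne fun h =>
    hab (hK.eq_of_subset_of_rk_le hb ha (h ▸ Finset.subset_inter hby hbz) hrb.ge).symm
  have hyu := hK.eq_of_subset_of_rk_le hu hy Finset.inter_subset_left
    (by have := hK.2.2.2.1 a ha _ hu hau; omega)
  exact hyu ▸ Finset.inter_subset_right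

end IsCC

/-- Induction on the corank of `x`. At corank one, `y` is a facet and closedness supplies a
second facet through `x`. Otherwise, if every facet through `x` contained `y`, take
`x ⊂ y₀ ⊂ y'` with `y₀ ⊆ y`, ranks increasing by one, and let `w` be the other cell strictly
between `x` and `y'` (diamond property). A facet through `w` missing `y'`, which exists by
induction, contains `y ⊇ y₀` and `w`, hence `y'`. -/
lemma Closed.exists_mem_dualSet_not_superset {K : Precc V} (hK : K.IsCC) (hcl : K.Closed)
    {x y : Finset V} (hx : x ∈ K.cells) (hy : y ∈ K.cells) (hxy : x ⊂ y) :
    ∃ z ∈ K.dualSet x, ¬ y ⊆ z := by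
  obtain ⟨-, -, -, hmono, -, hgap, hdiamond⟩ := id hK
  have hxy_rk := hmono x hx y hy hxy
  have hyR := rk_le_Rk hy
  by_cases hcorank : K.rk x + 1 = K.Rk
  · obtain ⟨z, hz, hzy⟩ := (Finset.one_lt_card_iff_nontrivial.mp
      (by rw [hcl.2 x hx hcorank]; omega)).exists_ne y
    obtain ⟨hz_cell, hz_rk, -⟩ := mem_dualSet.mp hz
    exact ⟨z, hz, fun hyz => hzy (hK.eq_of_subset_of_rk_le hy hz_cell hyz (by omega)).symm⟩
  by_contra! hall
  obtain ⟨y₀, hy₀, hxy₀, hy₀y, hry₀⟩ := hgap x hx y hy hxy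
  obtain ⟨z₀, hz₀⟩ := hcl.1.2.1.dualSet_nonempty hx
  have hz₀' := mem_dualSet.mp hz₀
  have hy₀z₀ : y₀ ⊂ z₀ :=
    (hy₀y.trans (hall z₀ hz₀)).ssubset_of_ne fun h => by rw [h] at hry₀; omega
  obtain ⟨y', hy', hy₀y', -, hry'⟩ := hgap y₀ hy₀ z₀ hz₀'.1 hy₀z₀
  obtain ⟨c₁, hc₁, c₂, hc₂, hc₁₂, hbetween⟩ :=
    hdiamond x hx y' hy' (hxy₀.subset.trans hy₀y'.subset) (by omega)
  obtain ⟨w, hw, hwy₀, hxw, hwy', hrw⟩ :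
      ∃ w ∈ K.cells, w ≠ y₀ ∧ x ⊆ w ∧ w ⊆ y' ∧ K.rk w = K.rk x + 1 := by
    rcases (hbetween y₀ hy₀).mp ⟨hxy₀.subset, hy₀y'.subset, hry₀⟩ with rfl | rfl
    · exact ⟨c₂, hc₂, hc₁₂.symm, (hbetween c₂ hc₂).mpr (Or.inr rfl)⟩
    · exact ⟨c₁, hc₁, hc₁₂, (hbetween c₁ hc₁).mpr (Or.inl rfl)⟩
  have hwy'' : w ⊂ y' := hwy'.ssubset_of_ne fun h => by rw [h] at hrw; omega
  obtain ⟨z, hz, hy'z⟩ := exists_mem_dualSet_not_superset hK hcl hw hy' hwy''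
  have hzx : z ∈ K.dualSet x := K.dualSet_anti hxw hz
  exact hy'z (hK.subset_of_two_faces_subset hy' hy₀ hw (mem_dualSet.mp hz).1 hy₀y'.subset hwy'
    (by omega) (by omega) hwy₀.symm (hy₀y.trans (hall z hzx)) (mem_dualSet.mp hz).2.2)
termination_by K.Rk - K.rk x
decreasing_by omega

lemma Closed.inf_dualSet_eq [Fintype V] {K : Precc V} (hK : K.IsCC) (hcl : K.Closed) {x : Finset V}
    (hx : x ∈ K.cells) : (K.dualSet x).inf id = x := by
  have hne := hcl.1.2.1.dualSet_nonempty hx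
  have hxinf : x ⊆ (K.dualSet x).inf id :=
    Finset.le_inf fun z hz => (mem_dualSet.mp hz).2.2
  have hcell := hK.inf_mem_cells hne (fun z hz => (mem_dualSet.mp hz).1) ((hK.1 x hx).mono hxinf)
  by_contra hneq
  obtain ⟨z, hz, hinf_z⟩ := hcl.exists_mem_dualSet_not_superset hK hx hcell
    (hxinf.ssubset_of_ne (Ne.symm hneq))
  exact hinf_z (Finset.inf_le (f := id) hz)

lemma Closed.dualSet_subset_dualSet_iff [Fintype V] {K : Precc V} (hK : K.IsCC) (hcl : K.Closed)
    {x y : Finset V} (hx : x ∈ K.cells) (hy : y ∈ K.cells) :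
    K.dualSet y ⊆ K.dualSet x ↔ x ⊆ y := by
  refine ⟨fun h => ?_, K.dualSet_anti⟩
  rw [← hcl.inf_dualSet_eq hK hx, ← hcl.inf_dualSet_eq hK hy]
  exact Finset.inf_mono h

end Precc

namespace Precc

variable {V : Type u} [DecidableEq V] [Fintype V]

/-- In a closed cc, `x ⊊ y` iff the dual set of `y` is
strictly contained in the dual set of `x`; consequently the duality map is a
bijection from `K` onto its image (i.e. it is injective on cells). -/
theorem statement_1 (K : Precc V) (hK : K.IsCC) (hcl : K.Closed) :
    (∀ x ∈ K.cells, ∀ y ∈ K.cells, (x ⊂ y ↔ K.dualSet y ⊂ K.dualSet x)) ∧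
    Set.InjOn K.dualSet ↑K.cells := by
  have hiff : ∀ {x y}, x ∈ K.cells → y ∈ K.cells → (K.dualSet y ⊆ K.dualSet x ↔ x ⊆ y) :=
    hcl.dualSet_subset_dualSet_iff hK
  refine ⟨fun x hx y hy => ?_, fun x hx y hy hxy => ?_⟩
  · rw [Finset.ssubset_def, Finset.ssubset_def, hiff hx hy, hiff hy hx]
  · exact subset_antisymm ((hiff hx hy).mp hxy.ge) ((hiff hy hx).mp hxy.le)

end Precc
end

section
/- Let K be a graph-based cell complex of rank R ≥ 2 and let C be a connected component of a 2-cell of K. Then there exist vertices v_1, …, v_k with C = {v_1, …, v_k} such that the edges of K contained in C are exactly {v_i, v_{i+1}} for 1 ≤ i ≤ k−1 together with {v_k, v_1}; that is, the 1-skeleton restricted to C is a cycle. -/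
open scoped Classical

universe u v

/-!
By the diamond property, a vertex `a` of the 2-cell `C₀` lies in exactly two edges inside `C₀`,
and as edges have two vertices, `a` has exactly two neighbours there. Since `C` is closed under
edges of `C₀`, the edges of `K` inside `C` form a 2-regular graph on `C` (`SimpleGraph.IsCycles`);
being connected, it is a single cycle, and walking around it enumerates `C`.
-/

theorem Finset.exists_eq_pair_of_card_eq_two {α : Type*} [DecidableEq α] {s : Finset α}
    (hs : s.card = 2) {a : α} (ha : a ∈ s) : ∃ b, b ≠ a ∧ s = {a, b} := by
  obtain ⟨b, hb⟩ := Finset.card_eq_one.mp (by rw [Finset.card_erase_of_mem ha, hs])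
  refine ⟨b, (Finset.mem_erase.mp (hb ▸ Finset.mem_singleton_self b)).1, ?_⟩
  rw [← Finset.insert_erase ha, hb]

namespace SimpleGraph

variable {V : Type*} {G : SimpleGraph V}

theorem Walk.getVert_mod_length {u : V} (p : G.Walk u u) {n : ℕ} (hn : n ≤ p.length) :
    p.getVert (n % p.length) = p.getVert n := by
  rcases hn.lt_or_eq with hlt | rfl
  · rw [Nat.mod_eq_of_lt hlt]
  · rw [Nat.mod_self, getVert_zero, getVert_length]

theorem IsCycles.exists_cyclic_enumeration [Finite V] (hG : G.IsCycles)
    {c : G.ConnectedComponent} {v : V} (hv : v ∈ c.supp) (hdeg : (G.neighborSet v).Nonempty) :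
    ∃ (k : ℕ) (hk : 0 < k) (w : Fin k → V), Function.Injective w ∧
      (∀ a, a ∈ c.supp ↔ ∃ i, w i = a) ∧
      ∀ a ∈ c.supp, ∀ b, G.Adj a b ↔
        ∃ i : Fin k, s(w i, w ⟨(i.1 + 1) % k, Nat.mod_lt _ hk⟩) = s(a, b) := by
  classical
  have := Fintype.ofFinite V
  obtain ⟨p, hp, hverts⟩ := hG.exists_cycle_toSubgraph_verts_eq_connectedComponentSupp hv hdeg
  have hk : 0 < p.length := (by norm_num : 0 < 3).trans_le hp.three_le_length
  have hsupp : ∀ a, a ∈ c.supp ↔ a ∈ p.support := by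
    intro a; rw [← Walk.mem_verts_toSubgraph, hverts]
  refine ⟨p.length, hk, fun i => p.getVert i, ?_, ?_, ?_⟩
  · intro i j hij
    exact Fin.ext (hp.getVert_injOn' (Nat.le_sub_one_of_lt i.2) (Nat.le_sub_one_of_lt j.2) hij)
  · intro a
    rw [hsupp, Walk.mem_support_iff_exists_getVert]
    constructor
    · rintro ⟨n, rfl, hn⟩
      exact ⟨⟨n % p.length, Nat.mod_lt _ hk⟩, p.getVert_mod_length hn⟩
    · rintro ⟨i, rfl⟩
      exact ⟨i, rfl, i.2.le⟩
  · intro a ha b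
    rw [← hp.adj_toSubgraph_iff_of_isCycles hG (hverts ▸ ha), Walk.toSubgraph_adj_iff]
    constructor
    · rintro ⟨n, hnab, hn⟩
      refine ⟨⟨n, hn⟩, ?_⟩
      simpa only [p.getVert_mod_length hn] using hnab
    · rintro ⟨i, hiab⟩
      refine ⟨i, ?_, i.2⟩
      simpa only [p.getVert_mod_length i.2] using hiab

end SimpleGraph

namespace Precc

variable {V : Type u} [DecidableEq V]

theorem edgeRel_comm {K : Precc V} {a b : V} : K.EdgeRel a b ↔ K.EdgeRel b a := by
  rw [EdgeRel, EdgeRel, Finset.pair_comm]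

def oneSkeletonOn (K : Precc V) (C : Finset V) : SimpleGraph V where
  Adj a b := a ≠ b ∧ a ∈ C ∧ b ∈ C ∧ K.EdgeRel a b
  symm := ⟨fun _ _ h => ⟨h.1.symm, h.2.2.1, h.2.1, edgeRel_comm.mp h.2.2.2⟩⟩
  loopless := ⟨fun _ h => h.1 rfl⟩

theorem oneSkeletonOn_adj {K : Precc V} {C : Finset V} {a b : V} :
    (K.oneSkeletonOn C).Adj a b ↔ a ≠ b ∧ a ∈ C ∧ b ∈ C ∧ K.EdgeRel a b :=
  Iff.rfl

theorem IsCC.exists_two_neighbors_in_twoCell {K : Precc V} (hK : K.IsCC)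
    (hgb : K.GraphBased) {C₀ : Finset V} (hC₀ : C₀ ∈ K.cells) (hrk2 : K.rk C₀ = 2)
    {a : V} (ha : a ∈ C₀) :
    ∃ b₁ b₂, b₁ ≠ b₂ ∧ ∀ b, (b ≠ a ∧ b ∈ C₀ ∧ K.EdgeRel a b) ↔ (b = b₁ ∨ b = b₂) := by
  obtain ⟨-, hvert, hrk0, -, -, -, hdiamond⟩ := hK
  have hsa : ({a} : Finset V) ∈ K.cells := hvert C₀ hC₀ a ha
  have hra : K.rk {a} = 0 := (hrk0 _ hsa).mpr (Finset.card_singleton a)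
  obtain ⟨z₁, hz₁, z₂, hz₂, hz, hiff⟩ :=
    hdiamond {a} hsa C₀ hC₀ (Finset.singleton_subset_iff.mpr ha) (by rw [hra, hrk2])
  have hedge : ∀ z ∈ K.cells, (z = z₁ ∨ z = z₂) →
      ∃ b, b ≠ a ∧ z = {a, b} ∧ b ∈ C₀ ∧ K.rk z = 1 := by
    intro z hzK hzz
    obtain ⟨haz, hzC₀, hrkz⟩ := (hiff z hzK).mpr hzz
    rw [hra] at hrkz
    obtain ⟨b, hba, rfl⟩ := Finset.exists_eq_pair_of_card_eq_two (hgb z hzK hrkz)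
      (Finset.singleton_subset_iff.mp haz)
    exact ⟨b, hba, rfl, hzC₀ (by simp), hrkz⟩
  obtain ⟨b₁, hb₁a, rfl, hb₁C₀, hrk₁⟩ := hedge _ hz₁ (Or.inl rfl)
  obtain ⟨b₂, hb₂a, rfl, hb₂C₀, hrk₂⟩ := hedge _ hz₂ (Or.inr rfl)
  refine ⟨b₁, b₂, fun h => hz (by rw [h]), fun b => ⟨?_, ?_⟩⟩
  · rintro ⟨hba, hbC₀, hcell, hrk⟩
    have hab : ({a, b} : Finset V) ⊆ C₀ := Finset.insert_subset ha (by simpa using hbC₀)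
    have hb : b ∈ ({a, b} : Finset V) := by simp
    rcases (hiff _ hcell).mp ⟨by simp, hab, by rw [hrk, hra]⟩ with h | h
    · left
      simpa [h, hba] using hb
    · right
      simpa [h, hba] using hb
  · rintro (rfl | rfl)
    exacts [⟨hb₁a, hb₁C₀, hz₁, hrk₁⟩, ⟨hb₂a, hb₂C₀, hz₂, hrk₂⟩]

theorem neighborSet_oneSkeletonOn_eq_pair {K : Precc V} (hK : K.IsCC) (hgb : K.GraphBased)
    {C₀ C : Finset V} (hC₀ : C₀ ∈ K.cells) (hrk2 : K.rk C₀ = 2) (hCsub : C ⊆ C₀)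
    (hclosed : ∀ e ∈ K.cells, K.rk e = 1 → e ⊆ C₀ → (e ∩ C).Nonempty → e ⊆ C)
    {a : V} (ha : a ∈ C) :
    ∃ b₁ b₂, b₁ ≠ b₂ ∧ (K.oneSkeletonOn C).neighborSet a = {b₁, b₂} := by
  obtain ⟨b₁, b₂, hb, hiff⟩ := hK.exists_two_neighbors_in_twoCell hgb hC₀ hrk2 (hCsub ha)
  refine ⟨b₁, b₂, hb, Set.ext fun b => ?_⟩
  rw [SimpleGraph.mem_neighborSet, oneSkeletonOn_adj, Set.mem_insert_iff, Set.mem_singleton_iff,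
    ← hiff]
  constructor
  · rintro ⟨hab, -, hbC, hedge⟩
    exact ⟨Ne.symm hab, hCsub hbC, hedge⟩
  · rintro ⟨hba, hbC₀, hcell, hrk⟩
    have hab : ({a, b} : Finset V) ⊆ C :=
      hclosed _ hcell hrk (Finset.insert_subset (hCsub ha) (by simpa using hbC₀)) ⟨a, by simp [ha]⟩
    exact ⟨Ne.symm hba, ha, hab (by simp), hcell, hrk⟩

theorem isCycles_oneSkeletonOn {K : Precc V} (hK : K.IsCC) (hgb : K.GraphBased)
    {C₀ C : Finset V} (hC₀ : C₀ ∈ K.cells) (hrk2 : K.rk C₀ = 2) (hCsub : C ⊆ C₀)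
    (hclosed : ∀ e ∈ K.cells, K.rk e = 1 → e ⊆ C₀ → (e ∩ C).Nonempty → e ⊆ C) :
    (K.oneSkeletonOn C).IsCycles := by
  rintro a ⟨b, hab⟩
  have ha : a ∈ C := (oneSkeletonOn_adj.mp hab).2.1
  obtain ⟨b₁, b₂, hb, hpair⟩ := neighborSet_oneSkeletonOn_eq_pair hK hgb hC₀ hrk2 hCsub hclosed ha
  rw [hpair, Set.ncard_pair hb]

theorem supp_connectedComponentMk_oneSkeletonOn {K : Precc V} {C : Finset V}
    (hconn : ∀ a ∈ C, ∀ b ∈ C, Relation.ReflTransGen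
        (fun s t => s ∈ C ∧ t ∈ C ∧ K.EdgeRel s t) a b) {a : V} (ha : a ∈ C) (b : V) :
    b ∈ ((K.oneSkeletonOn C).connectedComponentMk a).supp ↔ b ∈ C := by
  rw [SimpleGraph.ConnectedComponent.mem_supp_iff, SimpleGraph.ConnectedComponent.eq,
    SimpleGraph.reachable_comm, SimpleGraph.reachable_iff_reflTransGen]
  constructor
  · intro hab
    rcases hab.cases_tail with rfl | ⟨c, -, hcb⟩
    exacts [ha, (oneSkeletonOn_adj.mp hcb).2.2.1]
  · intro hb
    refine Relation.reflTransGen_closed (fun s t hst => ?_) _ _ (hconn a ha b hb)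
    by_cases hst' : s = t
    · exact hst' ▸ Relation.ReflTransGen.refl
    · exact Relation.ReflTransGen.single (oneSkeletonOn_adj.mpr ⟨hst', hst⟩)

theorem rk_eq_one_and_subset_iff_exists_adj {K : Precc V} (hgb : K.GraphBased) {C e : Finset V}
    (he : e ∈ K.cells) :
    (K.rk e = 1 ∧ e ⊆ C) ↔ ∃ a b, (K.oneSkeletonOn C).Adj a b ∧ e = {a, b} := by
  constructor
  · rintro ⟨hrk, heC⟩
    obtain ⟨a, b, hab, rfl⟩ := Finset.card_eq_two.mp (hgb e he hrk)
    exact ⟨a, b, oneSkeletonOn_adj.mpr ⟨hab, heC (by simp), heC (by simp), he, hrk⟩, rfl⟩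
  · rintro ⟨a, b, hab, rfl⟩
    obtain ⟨-, ha, hb, -, hrk⟩ := oneSkeletonOn_adj.mp hab
    exact ⟨hrk, Finset.insert_subset ha (by simpa using hb)⟩

end Precc

namespace Precc

variable {V : Type u} [DecidableEq V] [Fintype V]

theorem statement_3_general (K : Precc V) (hK : K.IsCC) (hgb : K.GraphBased)
    (C₀ : Finset V) (hC₀ : C₀ ∈ K.cells) (hrk2 : K.rk C₀ = 2)
    (C : Finset V) (hCsub : C ⊆ C₀) (hCne : C.Nonempty)
    (hclosed : ∀ e ∈ K.cells, K.rk e = 1 → e ⊆ C₀ → (e ∩ C).Nonempty → e ⊆ C)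
    (hconn : ∀ a ∈ C, ∀ b ∈ C, Relation.ReflTransGen
        (fun s t => s ∈ C ∧ t ∈ C ∧ K.EdgeRel s t) a b) :
    ∃ (k : ℕ) (hk : 0 < k) (w : Fin k → V),
      Function.Injective w ∧
      (∀ a : V, a ∈ C ↔ ∃ i, w i = a) ∧
      (∀ e ∈ K.cells, ((K.rk e = 1 ∧ e ⊆ C) ↔
        ∃ i : Fin k, e = ({w i, w ⟨(i.1 + 1) % k, Nat.mod_lt _ hk⟩} : Finset V))) := by
  obtain ⟨a, ha⟩ := hCne
  have hsupp := supp_connectedComponentMk_oneSkeletonOn hconn ha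
  obtain ⟨b₁, b₂, -, hnbrs⟩ := neighborSet_oneSkeletonOn_eq_pair hK hgb hC₀ hrk2 hCsub hclosed ha
  obtain ⟨k, hk, w, hinj, hrange, hadj⟩ :=
    (isCycles_oneSkeletonOn hK hgb hC₀ hrk2 hCsub hclosed).exists_cyclic_enumeration
      (c := (K.oneSkeletonOn C).connectedComponentMk a) rfl (hnbrs ▸ Set.insert_nonempty _ _)
  refine ⟨k, hk, w, hinj, fun b => (hsupp b).symm.trans (hrange b), fun e he => ?_⟩
  rw [rk_eq_one_and_subset_iff_exists_adj hgb he]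
  constructor
  · rintro ⟨b, c, hbc, rfl⟩
    obtain ⟨i, hi⟩ := (hadj b ((hsupp b).mpr (oneSkeletonOn_adj.mp hbc).2.1) c).mp hbc
    refine ⟨i, ?_⟩
    simpa only [Sym2.toFinset_mk_eq] using congrArg Sym2.toFinset hi.symm
  · rintro ⟨i, rfl⟩
    exact ⟨w i, _, (hadj _ ((hrange _).mpr ⟨i, rfl⟩) _).mpr ⟨i, rfl⟩, rfl⟩

/-- In a graph-based cc of rank `≥ 2`, every connected
component `C` of a 2-cell `C₀` admits a cyclic enumeration of its vertices
whose consecutive pairs are exactly the edges of `K` contained in `C`. -/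
theorem statement_3 (K : Precc V) (hK : K.IsCC) (hgb : K.GraphBased)
    (hR : 2 ≤ K.Rk)
    (C₀ : Finset V) (hC₀ : C₀ ∈ K.cells) (hrk2 : K.rk C₀ = 2)
    (C : Finset V) (hCsub : C ⊆ C₀) (hCne : C.Nonempty)
    (hclosed : ∀ e ∈ K.cells, K.rk e = 1 → e ⊆ C₀ → (e ∩ C).Nonempty → e ⊆ C)
    (hconn : ∀ a ∈ C, ∀ b ∈ C, Relation.ReflTransGen
        (fun s t => s ∈ C ∧ t ∈ C ∧ K.EdgeRel s t) a b) :
    ∃ (k : ℕ) (hk : 0 < k) (w : Fin k → V),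
      Function.Injective w ∧
      (∀ a : V, a ∈ C ↔ ∃ i, w i = a) ∧
      (∀ e ∈ K.cells, ((K.rk e = 1 ∧ e ⊆ C) ↔
        ∃ i : Fin k, e = ({w i, w ⟨(i.1 + 1) % k, Nat.mod_lt _ hk⟩} : Finset V))) :=
  statement_3_general K hK hgb C₀ hC₀ hrk2 C hCsub hCne hclosed hconn

end Precc
end

section
/- Let K be a pure graph-based 2-dimensional cell complex and let {v,w} be an edge of K. Then there is a bijection ∇ from the set of edges e at v such that some 2-cell contains both e and {v,w}, to the corresponding set of edges at w, satisfying: ∇({v,w}) = {v,w}; for any 2-cell C containing {v,w}, e ⊆ C if and only if ∇(e) ⊆ C; and the inverse of ∇ is the analogous map from w to v. -/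
open scoped Classical

universe u v

namespace Precc

variable {V : Type u} [DecidableEq V] [Fintype V]

lemma mem_connDomain' {K : Precc V} {a b : V} {e : Finset V} :
    e ∈ K.connDomain a b ↔ (e ∈ K.cells ∧ K.rk e = 1 ∧ a ∈ e) ∧
      ∃ C ∈ K.cells, K.rk C = 2 ∧ e ⊆ C ∧ ({a, b} : Finset V) ⊆ C := by
  simp [connDomain, EdgesAt, Finset.mem_filter, and_assoc]

/-- Two distinct edges lie in at most one common 2-cell. -/
lemma twoCell_unique' {K : Precc V} (hK : K.IsCC) (hgb : K.GraphBased)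
    {e e' C C' : Finset V} (he : e ∈ K.cells) (hrke : K.rk e = 1)
    (he' : e' ∈ K.cells) (hrke' : K.rk e' = 1) (hee' : e ≠ e')
    (hC : C ∈ K.cells) (hrkC : K.rk C = 2) (hC' : C' ∈ K.cells)
    (hrkC' : K.rk C' = 2) (h1 : e ⊆ C) (h2 : e ⊆ C') (h3 : e' ⊆ C)
    (h4 : e' ⊆ C') : C = C' := by
  obtain ⟨hne, -, -, hmono, hint, -, -⟩ := hK
  by_contra hCC
  have hsub : e ⊆ C ∩ C' := Finset.subset_inter h1 h2
  have hnonempty : C ∩ C' ≠ ∅ := by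
    intro h
    obtain ⟨x, hx⟩ := hne e he
    exact absurd (h ▸ hsub hx) (by simp)
  have hcell : C ∩ C' ∈ K.cells := (hint C hC C' hC').resolve_left hnonempty
  have hI : C ∩ C' = e := by
    by_contra hIe
    have hpe : e ⊂ C ∩ C' := hsub.ssubset_of_ne (Ne.symm hIe)
    have h5 : K.rk e < K.rk (C ∩ C') := hmono e he _ hcell hpe
    have hpc : C ∩ C' ⊂ C := by
      refine (Finset.inter_subset_left).ssubset_of_ne ?_
      intro h
      have : C ⊆ C' := by rw [← h]; exact Finset.inter_subset_right
      have : C ⊂ C' := this.ssubset_of_ne hCC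
      have := hmono C hC C' hC' this
      omega
    have := hmono _ hcell C hC hpc
    omega
  have hsub' : e' ⊆ e := hI ▸ Finset.subset_inter h3 h4
  have : e = e' := by
    refine (Finset.eq_of_subset_of_card_le hsub' ?_).symm
    rw [hgb e he hrke, hgb e' he' hrke']
  exact hee' this

/-- In a 2-cell, every vertex lies in exactly two edges of the cell. -/
lemma otherEdge' {K : Precc V} (hK : K.IsCC) {C : Finset V} {a : V}
    {e₀ : Finset V} (hC : C ∈ K.cells) (hrkC : K.rk C = 2) (haC : a ∈ C)
    (he₀ : e₀ ∈ K.cells) (hrk₀ : K.rk e₀ = 1) (ha₀ : a ∈ e₀) (h₀C : e₀ ⊆ C) :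
    ∃ e₁, e₁ ∈ K.cells ∧ K.rk e₁ = 1 ∧ a ∈ e₁ ∧ e₁ ⊆ C ∧ e₁ ≠ e₀ ∧
      ∀ z ∈ K.cells, K.rk z = 1 → a ∈ z → z ⊆ C → z = e₀ ∨ z = e₁ := by
  obtain ⟨-, hvert, hrk0, -, -, -, hdiam⟩ := hK
  have ha : ({a} : Finset V) ∈ K.cells := hvert C hC a haC
  have hra : K.rk ({a} : Finset V) = 0 := (hrk0 _ ha).2 (Finset.card_singleton a)
  obtain ⟨z₁, hz₁, z₂, hz₂, hz12, hchar⟩ :=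
    hdiam ({a} : Finset V) ha C hC (Finset.singleton_subset_iff.2 haC) (by omega)
  have hmem : ∀ z ∈ K.cells, (({a} : Finset V) ⊆ z ∧ z ⊆ C ∧ K.rk z = K.rk ({a} : Finset V) + 1)
      ↔ (z = z₁ ∨ z = z₂) := hchar
  have h0 : e₀ = z₁ ∨ e₀ = z₂ := (hmem e₀ he₀).1
    ⟨Finset.singleton_subset_iff.2 ha₀, h₀C, by omega⟩
  rcases h0 with h0 | h0
  · have h2 := (hmem z₂ hz₂).2 (Or.inr rfl)
    refine ⟨z₂, hz₂, by omega, Finset.singleton_subset_iff.1 h2.1, h2.2.1,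
      by rw [h0]; exact hz12.symm, ?_⟩
    intro z hz hrz haz hzC
    have := (hmem z hz).1 ⟨Finset.singleton_subset_iff.2 haz, hzC, by omega⟩
    rcases this with h | h
    · exact Or.inl (h.trans h0.symm)
    · exact Or.inr h
  · have h2 := (hmem z₁ hz₁).2 (Or.inl rfl)
    refine ⟨z₁, hz₁, by omega, Finset.singleton_subset_iff.1 h2.1, h2.2.1,
      by rw [h0]; exact hz12, ?_⟩
    intro z hz hrz haz hzC
    have := (hmem z hz).1 ⟨Finset.singleton_subset_iff.2 haz, hzC, by omega⟩
    rcases this with h | h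
    · exact Or.inr h
    · exact Or.inl (h.trans h0.symm)

/-- The defining property of the connection map: `f` is an edge at `b`,
distinct from `{a,b}`, sharing a 2-cell with `e` and `{a,b}`. -/
def ConnSpec (K : Precc V) (a b : V) (e f : Finset V) : Prop :=
  f ≠ ({a, b} : Finset V) ∧ f ∈ K.cells ∧ K.rk f = 1 ∧ b ∈ f ∧
    ∃ C ∈ K.cells, K.rk C = 2 ∧ e ⊆ C ∧ f ⊆ C ∧ ({a, b} : Finset V) ⊆ C

open Classical in
/-- The connection map `∇^a_b`. -/
noncomputable def connMap (K : Precc V) (a b : V) (e : Finset V) : Finset V :=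
  if h : e ≠ ({a, b} : Finset V) ∧ ∃ f, ConnSpec K a b e f then h.2.choose
  else ({a, b} : Finset V)

lemma connMap_pair (K : Precc V) (a b : V) : K.connMap a b ({a, b} : Finset V)
    = ({a, b} : Finset V) := by
  rw [connMap, dif_neg]
  simp

/-- Existence of the partner edge. -/
lemma connSpec_exists {K : Precc V} (hK : K.IsCC) {a b : V}
    (hab : b ∈ ({a, b} : Finset V)) (hcab : ({a, b} : Finset V) ∈ K.cells)
    (hrab : K.rk ({a, b} : Finset V) = 1)
    {e C : Finset V} (hC : C ∈ K.cells) (hrkC : K.rk C = 2) (heC : e ⊆ C)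
    (habC : ({a, b} : Finset V) ⊆ C) : ∃ f, ConnSpec K a b e f := by
  obtain ⟨e₁, h1, h2, h3, h4, h5, -⟩ :=
    otherEdge' hK hC hrkC (habC hab) hcab hrab hab habC
  exact ⟨e₁, h5, h1, h2, h3, C, hC, hrkC, heC, h4, habC⟩

/-- Uniqueness of the partner edge. -/
lemma connSpec_unique {K : Precc V} (hK : K.IsCC) (hgb : K.GraphBased) {a b : V}
    (hab : b ∈ ({a, b} : Finset V)) (hcab : ({a, b} : Finset V) ∈ K.cells)
    (hrab : K.rk ({a, b} : Finset V) = 1)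
    {e f f' : Finset V} (he : e ∈ K.cells) (hrke : K.rk e = 1)
    (hene : e ≠ ({a, b} : Finset V))
    (hf : ConnSpec K a b e f) (hf' : ConnSpec K a b e f') : f = f' := by
  obtain ⟨hfne, hfc, hfr, hbf, C, hC, hrkC, heC, hfC, habC⟩ := hf
  obtain ⟨hfne', hfc', hfr', hbf', C', hC', hrkC', heC', hfC', habC'⟩ := hf'
  have hCC : C = C' :=
    twoCell_unique' hK hgb he hrke hcab hrab hene hC hrkC hC' hrkC'
      heC heC' habC habC'
  subst hCC
  obtain ⟨e₁, -, -, -, -, hne₁, huniq⟩ :=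
    otherEdge' hK hC hrkC (habC hab) hcab hrab hab habC
  have h1 := (huniq f hfc hfr hbf hfC).resolve_left hfne
  have h2 := (huniq f' hfc' hfr' hbf' hfC').resolve_left hfne'
  rw [h1, h2]

lemma connMap_spec {K : Precc V} {a b : V} {e : Finset V}
    (hene : e ≠ ({a, b} : Finset V)) (hex : ∃ f, ConnSpec K a b e f) :
    ConnSpec K a b e (K.connMap a b e) := by
  rw [connMap, dif_pos ⟨hene, hex⟩]
  exact (⟨hene, hex⟩ : e ≠ ({a, b} : Finset V) ∧ _).2.choose_spec

/-- One-sided version of the main statement, to be applied symmetrically. -/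
lemma connMap_props {K : Precc V} (hK : K.IsCC) (hgb : K.GraphBased) {a b : V}
    (hcab : ({a, b} : Finset V) ∈ K.cells) (hrab : K.rk ({a, b} : Finset V) = 1)
    (hne : a ≠ b) :
    (∀ e ∈ K.connDomain a b, K.connMap a b e ∈ K.connDomain b a) ∧
    (∀ e ∈ K.connDomain a b, ∀ C ∈ K.cells, K.rk C = 2 →
      ({a, b} : Finset V) ⊆ C → (e ⊆ C ↔ K.connMap a b e ⊆ C)) ∧
    (∀ e ∈ K.connDomain a b, K.connMap b a (K.connMap a b e) = e) := by
  have hab : b ∈ ({a, b} : Finset V) := by simp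
  have hba : a ∈ ({b, a} : Finset V) := by simp
  have hpair : ({b, a} : Finset V) = ({a, b} : Finset V) := Finset.pair_comm b a
  refine ⟨?_, ?_, ?_⟩
  · intro e he
    obtain ⟨⟨hec, hre, hae⟩, C, hC, hrkC, heC, habC⟩ := mem_connDomain'.1 he
    by_cases hene : e = ({a, b} : Finset V)
    · subst hene
      rw [connMap_pair]
      exact mem_connDomain'.2 ⟨⟨hec, hre, hab⟩, C, hC, hrkC, heC,
        by rw [hpair]; exact habC⟩
    · have hex := connSpec_exists hK hab hcab hrab hC hrkC heC habC
      obtain ⟨hfne, hfc, hfr, hbf, C', hC', hrkC', heC', hfC', habC'⟩ :=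
        connMap_spec hene hex
      exact mem_connDomain'.2 ⟨⟨hfc, hfr, hbf⟩, C', hC', hrkC', hfC',
        by rw [hpair]; exact habC'⟩
  · intro e he C hC hrkC habC
    obtain ⟨⟨hec, hre, hae⟩, C₀, hC₀, hrkC₀, heC₀, habC₀⟩ := mem_connDomain'.1 he
    by_cases hene : e = ({a, b} : Finset V)
    · subst hene; rw [connMap_pair]
    · have hex := connSpec_exists hK hab hcab hrab hC₀ hrkC₀ heC₀ habC₀
      obtain ⟨hfne, hfc, hfr, hbf, C', hC', hrkC', heC', hfC', habC'⟩ :=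
        connMap_spec hene hex
      constructor
      · intro heC
        have : C = C' := twoCell_unique' hK hgb hec hre hcab hrab hene
          hC hrkC hC' hrkC' heC heC' habC habC'
        rw [this]; exact hfC'
      · intro hfC
        have : C = C' := twoCell_unique' hK hgb hfc hfr hcab hrab hfne
          hC hrkC hC' hrkC' hfC hfC' habC habC'
        rw [this]; exact heC'
  · intro e he
    obtain ⟨⟨hec, hre, hae⟩, C₀, hC₀, hrkC₀, heC₀, habC₀⟩ := mem_connDomain'.1 he
    by_cases hene : e = ({a, b} : Finset V)
    · subst hene
      rw [connMap_pair, ← hpair, connMap_pair, hpair]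
    · have hex := connSpec_exists hK hab hcab hrab hC₀ hrkC₀ heC₀ habC₀
      obtain ⟨hfne, hfc, hfr, hbf, C', hC', hrkC', heC', hfC', habC'⟩ :=
        connMap_spec hene hex
      have hspec : ConnSpec K b a (K.connMap a b e) e := by
        refine ⟨by rw [hpair]; exact hene, hec, hre, hae, C', hC', hrkC',
          hfC', heC', by rw [hpair]; exact habC'⟩
      have hfne2 : K.connMap a b e ≠ ({b, a} : Finset V) := by
        rw [hpair]; exact hfne
      have hself : ConnSpec K b a (K.connMap a b e) (K.connMap b a (K.connMap a b e)) :=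
        connMap_spec hfne2 ⟨e, hspec⟩
      exact connSpec_unique hK hgb hba (hpair ▸ hcab) (hpair ▸ hrab)
        hfc hfr hfne2 hself hspec

/-- In a pure graph-based 2-cc, for every edge `{v,w}` there
is a bijection `∇ = f` from the edges at `v` sharing a 2-cell with `{v,w}` to
the corresponding edges at `w`, fixing `{v,w}`, compatible with all 2-cells
containing `{v,w}`, and whose inverse is the analogous map `g` from `w` to
`v`. -/
theorem statement_6 (K : Precc V) (hK : K.IsCC) (hpure : K.Pure)
    (hgb : K.GraphBased) (hR : K.Rk = 2) (v w : V)
    (hvw : ({v, w} : Finset V) ∈ K.cells) (hrk1 : K.rk ({v, w} : Finset V) = 1)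
    (hne : v ≠ w) :
    ∃ f g : Finset V → Finset V,
      Set.BijOn f ↑(K.connDomain v w) ↑(K.connDomain w v) ∧
      f ({v, w} : Finset V) = ({v, w} : Finset V) ∧
      (∀ e ∈ K.connDomain v w, ∀ C ∈ K.cells, K.rk C = 2 →
        ({v, w} : Finset V) ⊆ C → (e ⊆ C ↔ f e ⊆ C)) ∧
      Set.BijOn g ↑(K.connDomain w v) ↑(K.connDomain v w) ∧
      g ({v, w} : Finset V) = ({v, w} : Finset V) ∧
      (∀ e ∈ K.connDomain w v, ∀ C ∈ K.cells, K.rk C = 2 →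
        ({v, w} : Finset V) ⊆ C → (e ⊆ C ↔ g e ⊆ C)) ∧
      (∀ e ∈ K.connDomain v w, g (f e) = e) ∧
      (∀ e ∈ K.connDomain w v, f (g e) = e) := by
  have hpair : ({w, v} : Finset V) = ({v, w} : Finset V) := Finset.pair_comm w v
  obtain ⟨hmaps, hcompat, hinv⟩ := connMap_props hK hgb hvw hrk1 hne
  obtain ⟨hmaps', hcompat', hinv'⟩ :=
    connMap_props hK hgb (hpair ▸ hvw) (hpair ▸ hrk1) hne.symm
  refine ⟨K.connMap v w, K.connMap w v,
    Set.InvOn.bijOn ⟨fun e he => hinv e he, fun e he => hinv' e he⟩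
      (fun e he => hmaps e he) (fun e he => hmaps' e he),
    connMap_pair K v w, hcompat, ?_,
    by rw [← hpair]; exact connMap_pair K w v,
    fun e he C hC h2 hsub => hcompat' e he C hC h2 (by rw [hpair]; exact hsub),
    hinv, hinv'⟩
  exact Set.InvOn.bijOn ⟨fun e he => hinv' e he, fun e he => hinv e he⟩
    (fun e he => hmaps' e he) (fun e he => hmaps e he)

end Precc
end

section
/- A connected 2-dimensional cell complex K is full if and only if there exists n ∈ ℕ* such that K is n-regular (every vertex lies in exactly n edges) and (n−1)-edge-regular (every edge lies in exactly n−1 two-cells). -/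
open scoped Classical

universe u v

namespace Precc

variable {V : Type u} [DecidableEq V] [Fintype V]

lemma aux_edgesIn_eq_pair (K : Precc V) (hK : K.IsCC) {C : Finset V} (hC : C ∈ K.cells)
    (hC2 : K.rk C = 2) {a : V} (ha : a ∈ C) :
    ∃ z₁ z₂ : Finset V, z₁ ≠ z₂ ∧ K.edgesIn a C = {z₁, z₂} := by
  obtain ⟨h1, h2, h3, h4, h5, h6, h7⟩ := hK
  have hsa : ({a} : Finset V) ∈ K.cells := h2 C hC a ha
  have hra : K.rk {a} = 0 := (h3 _ hsa).mpr (Finset.card_singleton a)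
  obtain ⟨z₁, hz₁, z₂, hz₂, hne, hiff⟩ :=
    h7 {a} hsa C hC (Finset.singleton_subset_iff.mpr ha) (by omega)
  refine ⟨z₁, z₂, hne, ?_⟩
  ext z
  simp only [edgesIn, EdgesAt, Finset.mem_filter, Finset.mem_insert, Finset.mem_singleton]
  constructor
  · rintro ⟨⟨hzc, hz1, haz⟩, hzC⟩
    exact (hiff z hzc).mp ⟨Finset.singleton_subset_iff.mpr haz, hzC, by omega⟩
  · rintro (rfl | rfl)
    · obtain ⟨hs, hsC, hrk⟩ := (hiff z hz₁).mpr (Or.inl rfl)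
      exact ⟨⟨hz₁, by omega, Finset.singleton_subset_iff.mp hs⟩, hsC⟩
    · obtain ⟨hs, hsC, hrk⟩ := (hiff z hz₂).mpr (Or.inr rfl)
      exact ⟨⟨hz₂, by omega, Finset.singleton_subset_iff.mp hs⟩, hsC⟩

lemma aux_edgesIn_card (K : Precc V) (hK : K.IsCC) {C : Finset V} (hC : C ∈ K.cells)
    (hC2 : K.rk C = 2) {a : V} (ha : a ∈ C) :
    (K.edgesIn a C).card = 2 := by
  obtain ⟨z₁, z₂, hne, hpair⟩ := K.aux_edgesIn_eq_pair hK hC hC2 ha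
  rw [hpair, Finset.card_insert_of_notMem (by simpa using hne), Finset.card_singleton]

lemma aux_unique_twocell (K : Precc V) (hK : K.IsCC) {C C' e₁ e₂ : Finset V}
    (hC : C ∈ K.cells) (hC2 : K.rk C = 2) (hC' : C' ∈ K.cells) (hC'2 : K.rk C' = 2)
    (he₁ : e₁ ∈ K.cells) (hr₁ : K.rk e₁ = 1) (he₂ : e₂ ∈ K.cells) (hr₂ : K.rk e₂ = 1)
    (hne : e₁ ≠ e₂) (h₁C : e₁ ⊆ C) (h₂C : e₂ ⊆ C) (h₁C' : e₁ ⊆ C') (h₂C' : e₂ ⊆ C') :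
    C = C' := by
  by_contra hCC
  obtain ⟨h1, h2, h3, h4, h5, h6, h7⟩ := hK
  have hsub1 : e₁ ⊆ C ∩ C' := Finset.subset_inter h₁C h₁C'
  have hsub2 : e₂ ⊆ C ∩ C' := Finset.subset_inter h₂C h₂C'
  have hint : C ∩ C' ∈ K.cells := by
    rcases h5 C hC C' hC' with h | h
    · obtain ⟨v, hv⟩ := h1 e₁ he₁
      exact absurd (hsub1 hv) (by simp [h])
    · exact h
  have hne1 : e₁ ≠ C ∩ C' := by
    intro heq
    have h21 : e₂ ⊆ e₁ := heq ▸ hsub2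
    rcases eq_or_ne e₂ e₁ with h | h
    · exact hne h.symm
    · have := h4 e₂ he₂ e₁ he₁ (lt_of_le_of_ne h21 h)
      omega
  have hlt1 : K.rk e₁ < K.rk (C ∩ C') := h4 e₁ he₁ _ hint (lt_of_le_of_ne hsub1 hne1)
  have hne2 : C ∩ C' ≠ C := by
    intro heq
    have hCsub : C ⊆ C' := by
      intro v hv
      exact (Finset.mem_inter.mp (heq ▸ hv)).2
    have := h4 C hC C' hC' (lt_of_le_of_ne hCsub hCC)
    omega
  have hlt2 : K.rk (C ∩ C') < K.rk C :=
    h4 _ hint C hC (lt_of_le_of_ne Finset.inter_subset_left hne2)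
  omega

lemma aux_image_mem (K : Precc V) (hK : K.IsCC) (a : V) :
    ∀ C ∈ K.cells.filter (fun C => K.rk C = 2 ∧ a ∈ C),
      K.edgesIn a C ∈ (K.EdgesAt a).powersetCard 2 := by
  intro C hC
  rw [Finset.mem_filter] at hC
  obtain ⟨hC, hC2, ha⟩ := hC
  exact Finset.mem_powersetCard.mpr
    ⟨Finset.filter_subset _ _, K.aux_edgesIn_card hK hC hC2 ha⟩

lemma aux_mem_edgesIn {K : Precc V} {a : V} {z C : Finset V} :
    z ∈ K.edgesIn a C ↔ (z ∈ K.cells ∧ K.rk z = 1 ∧ a ∈ z) ∧ z ⊆ C := by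
  simp [edgesIn, EdgesAt, Finset.mem_filter, and_assoc]

lemma aux_injOn (K : Precc V) (hK : K.IsCC) (a : V) :
    Set.InjOn (K.edgesIn a) (K.cells.filter fun C => K.rk C = 2 ∧ a ∈ C) := by
  intro C hC C' hC' heq
  simp only [Finset.coe_filter, Set.mem_setOf_eq] at hC hC'
  obtain ⟨hCc, hC2, haC⟩ := hC
  obtain ⟨hC'c, hC'2, haC'⟩ := hC'
  obtain ⟨z₁, z₂, hne, hpair⟩ := K.aux_edgesIn_eq_pair hK hCc hC2 haC
  have hz₁ : z₁ ∈ K.edgesIn a C := by rw [hpair]; simp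
  have hz₂ : z₂ ∈ K.edgesIn a C := by rw [hpair]; simp
  have hz₁' : z₁ ∈ K.edgesIn a C' := heq ▸ hz₁
  have hz₂' : z₂ ∈ K.edgesIn a C' := heq ▸ hz₂
  rw [aux_mem_edgesIn] at hz₁ hz₂ hz₁' hz₂'
  exact K.aux_unique_twocell hK hCc hC2 hC'c hC'2 hz₁.1.1 hz₁.1.2.1 hz₂.1.1 hz₂.1.2.1
    hne hz₁.2 hz₂.2 hz₁'.2 hz₂'.2

lemma aux_count_pairs {α : Type v} [DecidableEq α] {E : Finset α} {e : α} (he : e ∈ E) :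
    ((E.powersetCard 2).filter fun S => e ∈ S).card = E.card - 1 := by
  rw [← Finset.card_erase_of_mem he]
  refine (Finset.card_bij (fun e' _ => ({e, e'} : Finset α)) ?_ ?_ ?_).symm
  · intro e' h
    rw [Finset.mem_erase] at h
    refine Finset.mem_filter.mpr ⟨Finset.mem_powersetCard.mpr ⟨?_, ?_⟩, ?_⟩
    · exact Finset.insert_subset he (Finset.singleton_subset_iff.mpr h.2)
    · exact Finset.card_pair (Ne.symm h.1)
    · exact Finset.mem_insert_self _ _
  · intro x hx y hy hxy
    rw [Finset.mem_erase] at hx hy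
    have hxy' : ({e, x} : Finset α) = {e, y} := hxy
    have : x ∈ ({e, y} : Finset α) :=
      hxy' ▸ Finset.mem_insert_of_mem (Finset.mem_singleton_self x)
    rcases Finset.mem_insert.mp this with h | h
    · exact absurd h hx.1
    · exact Finset.mem_singleton.mp h
  · intro S hS
    rw [Finset.mem_filter, Finset.mem_powersetCard] at hS
    obtain ⟨⟨hSE, hS2⟩, heS⟩ := hS
    have : (S.erase e).card = 1 := by rw [Finset.card_erase_of_mem heS, hS2]
    obtain ⟨e', he'⟩ := Finset.card_eq_one.mp this
    have he'm : e' ∈ S.erase e := he' ▸ Finset.mem_singleton_self e'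
    rw [Finset.mem_erase] at he'm
    refine ⟨e', Finset.mem_erase.mpr ⟨he'm.1, hSE he'm.2⟩, ?_⟩
    show ({e, e'} : Finset α) = S
    rw [← Finset.insert_erase heS, he']

lemma aux_count_filter_eq (K : Precc V) {a : V} {e : Finset V} (ha : a ∈ e) :
    (K.cellsOfRank 2).filter (fun C => e ⊆ C)
      = (K.cells.filter fun C => K.rk C = 2 ∧ a ∈ C).filter (fun C => e ⊆ C) := by
  ext C
  simp only [cellsOfRank, Finset.mem_filter]
  constructor
  · rintro ⟨⟨hC, h2⟩, hsub⟩
    exact ⟨⟨hC, h2, hsub ha⟩, hsub⟩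
  · rintro ⟨⟨hC, h2, -⟩, hsub⟩
    exact ⟨⟨hC, h2⟩, hsub⟩

/-- Under fullness the 2-cells at `a` biject with 2-subsets of `EdgesAt a`. -/
lemma aux_image_eq (K : Precc V) (hK : K.IsCC) (hfull : K.Full) {a : V}
    (hsa : ({a} : Finset V) ∈ K.cells) :
    (K.cells.filter fun C => K.rk C = 2 ∧ a ∈ C).image (K.edgesIn a)
      = (K.EdgesAt a).powersetCard 2 := by
  apply Finset.Subset.antisymm
  · exact Finset.image_subset_iff.mpr (K.aux_image_mem hK a)
  · intro S hS
    rw [Finset.mem_powersetCard] at hS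
    obtain ⟨x, hx, hxr, hxS⟩ := hfull a hsa 2 le_rfl le_rfl S hS.1 hS.2
    have hax : a ∈ x := by
      have : (0 : ℕ) < S.card := by omega
      obtain ⟨z, hz⟩ := Finset.card_pos.mp this
      have := aux_mem_edgesIn.mp (hxS ▸ hz)
      exact this.2 this.1.2.2
    exact Finset.mem_image.mpr ⟨x, Finset.mem_filter.mpr ⟨hx, hxr, hax⟩, hxS⟩

/-- Under fullness, the number of 2-cells containing an edge `e` is one less
than the number of edges at any vertex of `e`. -/
lemma aux_edge_count (K : Precc V) (hK : K.IsCC) (hfull : K.Full)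
    {e : Finset V} (he : e ∈ K.cells) (hre : K.rk e = 1) {a : V} (ha : a ∈ e) :
    ((K.cellsOfRank 2).filter fun C => e ⊆ C).card = (K.EdgesAt a).card - 1 := by
  have hsa : ({a} : Finset V) ∈ K.cells := hK.2.1 e he a ha
  have hea : e ∈ K.EdgesAt a := Finset.mem_filter.mpr ⟨he, hre, ha⟩
  set T := K.cells.filter fun C => K.rk C = 2 ∧ a ∈ C with hT
  rw [K.aux_count_filter_eq ha]
  have h1 : T.filter (fun C => e ⊆ C) = T.filter (fun C => e ∈ K.edgesIn a C) := by
    apply Finset.filter_congr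
    intro C _
    simp only [aux_mem_edgesIn]
    constructor
    · intro h; exact ⟨⟨he, hre, ha⟩, h⟩
    · intro h; exact h.2
  have hinj : Set.InjOn (K.edgesIn a) (T.filter fun C => e ⊆ C) :=
    (K.aux_injOn hK a).mono (by exact_mod_cast Finset.filter_subset _ _)
  have h2 : ((T.filter fun C => e ⊆ C).image (K.edgesIn a)).card
      = (T.filter fun C => e ⊆ C).card := Finset.card_image_of_injOn hinj
  have h3 : (T.filter fun C => e ⊆ C).image (K.edgesIn a)
      = (T.image (K.edgesIn a)).filter (fun S => e ∈ S) := by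
    rw [h1]
    exact (Finset.filter_image (p := fun S => e ∈ S)).symm
  rw [← h2, h3, K.aux_image_eq hK hfull hsa, aux_count_pairs hea]

/-- A connected 2-dimensional cc is full iff there is
`n ∈ ℕ*` such that it is `n`-regular and `(n-1)`-edge-regular. -/
theorem statement_7 (K : Precc V) (hK : K.IsCC) (hR : K.Rk = 2)
    (hconn : K.Connected) :
    K.Full ↔ ∃ n : ℕ, 1 ≤ n ∧ K.Regular n ∧ K.EdgeRegular (n - 1) := by
  constructor
  · intro hfull
    -- find a rank-2 cell
    have hne : K.cells.Nonempty := by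
      rcases Finset.eq_empty_or_nonempty K.cells with h | h
      · exfalso
        have : K.Rk = 0 := by simp [Rk, h]
        omega
      · exact h
    obtain ⟨C₀, hC₀, hsup⟩ := Finset.exists_mem_eq_sup K.cells hne K.rk
    have hC₀2 : K.rk C₀ = 2 := by rw [← hsup, ← Rk, hR]
    obtain ⟨a₀, ha₀⟩ := hK.1 C₀ hC₀
    have hsa₀ : ({a₀} : Finset V) ∈ K.cells := hK.2.1 C₀ hC₀ a₀ ha₀
    -- a₀ lies in an edge
    have hedge : ∃ z, z ∈ K.EdgesAt a₀ := by
      have hss : ({a₀} : Finset V) ⊂ C₀ := by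
        refine lt_of_le_of_ne (Finset.singleton_subset_iff.mpr ha₀) ?_
        intro h
        have := (hK.2.2.1 _ hsa₀).mpr (Finset.card_singleton a₀)
        rw [h] at this
        omega
      obtain ⟨z, hz, hzs, hzC, hzr⟩ := hK.2.2.2.2.2.1 {a₀} hsa₀ C₀ hC₀ hss
      have hr0 : K.rk ({a₀} : Finset V) = 0 :=
        (hK.2.2.1 _ hsa₀).mpr (Finset.card_singleton a₀)
      refine ⟨z, Finset.mem_filter.mpr ⟨hz, by omega, ?_⟩⟩
      exact hzs.1 (Finset.mem_singleton_self a₀)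
    set n := (K.EdgesAt a₀).card with hn
    have hn1 : 1 ≤ n := Finset.card_pos.mpr hedge
    -- adjacent vertices have the same number of edges
    have step : ∀ b c : V, K.EdgeRel b c → (K.EdgesAt b).card = (K.EdgesAt c).card := by
      intro b c ⟨hbc, hrbc⟩
      have hb : b ∈ ({b, c} : Finset V) := Finset.mem_insert_self _ _
      have hc : c ∈ ({b, c} : Finset V) :=
        Finset.mem_insert_of_mem (Finset.mem_singleton_self c)
      have h1 := K.aux_edge_count hK hfull hbc hrbc hb
      have h2 := K.aux_edge_count hK hfull hbc hrbc hc
      have hb1 : 1 ≤ (K.EdgesAt b).card :=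
        Finset.card_pos.mpr ⟨{b, c}, Finset.mem_filter.mpr ⟨hbc, hrbc, hb⟩⟩
      have hc1 : 1 ≤ (K.EdgesAt c).card :=
        Finset.card_pos.mpr ⟨{b, c}, Finset.mem_filter.mpr ⟨hbc, hrbc, hc⟩⟩
      omega
    have key : ∀ a b : V, Relation.ReflTransGen K.EdgeRel a b →
        (K.EdgesAt a).card = (K.EdgesAt b).card := by
      intro a b h
      induction h with
      | refl => rfl
      | tail _ h2 ih => exact ih.trans (step _ _ h2)
    have hreg : K.Regular n := by
      intro a ha
      have hsa : ({a} : Finset V) ∈ K.cells := by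
        simpa [vertices] using ha
      exact key a a₀ (hconn.2 a a₀ hsa hsa₀)
    refine ⟨n, hn1, hreg, ?_⟩
    intro e he hre
    obtain ⟨a, ha⟩ := hK.1 e he
    have hsa : ({a} : Finset V) ∈ K.cells := hK.2.1 e he a ha
    have hav : a ∈ K.vertices := by simp [vertices, hsa]
    rw [K.aux_edge_count hK hfull he hre ha, hreg a hav]
  · rintro ⟨n, hn1, hreg, hereg⟩
    intro a hsa j hj2 hj2' S hSsub hScard
    have hj : j = 2 := le_antisymm hj2' hj2
    subst hj
    have hav : a ∈ K.vertices := by simp [vertices, hsa]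
    have hEa : (K.EdgesAt a).card = n := hreg a hav
    have hn2 : 2 ≤ n := by
      have := Finset.card_le_card hSsub
      omega
    set T := K.cells.filter fun C => K.rk C = 2 ∧ a ∈ C with hT
    -- double counting
    have hdc : ∑ C ∈ T, ((K.EdgesAt a).filter fun e => e ⊆ C).card
        = ∑ e ∈ K.EdgesAt a, (T.filter fun C => e ⊆ C).card := by
      simp only [Finset.card_filter]
      exact Finset.sum_comm
    have hlhs : ∑ C ∈ T, ((K.EdgesAt a).filter fun e => e ⊆ C).card = 2 * T.card := by
      rw [Finset.sum_congr rfl (fun C hC => ?_), Finset.sum_const, smul_eq_mul, mul_comm]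
      rw [Finset.mem_filter] at hC
      exact K.aux_edgesIn_card hK hC.1 hC.2.1 hC.2.2
    have hrhs : ∑ e ∈ K.EdgesAt a, (T.filter fun C => e ⊆ C).card = n * (n - 1) := by
      rw [Finset.sum_congr rfl (fun e he => ?_), Finset.sum_const, smul_eq_mul, hEa]
      simp only [EdgesAt, Finset.mem_filter] at he
      rw [← K.aux_count_filter_eq he.2.2]
      exact hereg e he.1 he.2.1
    have hTcard : 2 * T.card = n * (n - 1) := by rw [← hlhs, hdc, hrhs]
    have hP : ((K.EdgesAt a).powersetCard 2).card = n.choose 2 := by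
      rw [Finset.card_powersetCard, hEa]
    have hchoose : 2 * n.choose 2 = n * (n - 1) := by
      have heven : 2 ∣ n * (n - 1) := by
        have : n * (n - 1) = (n - 1) * ((n - 1) + 1) := by
          rw [mul_comm]
          congr 1
          omega
        rw [this]
        exact (Nat.even_mul_succ_self (n - 1)).two_dvd
      rw [Nat.choose_two_right, Nat.mul_div_cancel' heven]
    have hcards : T.card = ((K.EdgesAt a).powersetCard 2).card := by omega
    have himsub : T.image (K.edgesIn a) ⊆ (K.EdgesAt a).powersetCard 2 :=
      Finset.image_subset_iff.mpr (K.aux_image_mem hK a)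
    have himcard : (T.image (K.edgesIn a)).card = T.card :=
      Finset.card_image_of_injOn (K.aux_injOn hK a)
    have him : T.image (K.edgesIn a) = (K.EdgesAt a).powersetCard 2 := by
      apply Finset.eq_of_subset_of_card_le himsub
      omega
    have hSmem : S ∈ T.image (K.edgesIn a) := by
      rw [him]
      exact Finset.mem_powersetCard.mpr ⟨hSsub, hScard⟩
    obtain ⟨C, hC, hCS⟩ := Finset.mem_image.mp hSmem
    rw [Finset.mem_filter] at hC
    exact ⟨C, hC.1, hC.2.1, hCS⟩

end Precc
end
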